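/- arXiv:2110.15893 — 2 statements merged into one kernel-verified Lean document; each statement's English description precedes it below -/
import Mathlib

section
/- Let r be a natural number, let l, η : ℝ → ℝ be 1-periodic functions of class C^r, and let a : ℝ → ℝ be a C^r function with a(x+1) = a(x)+1 for all x (a lift of a degree-one circle map). If ‖l‖_{C⁰} · (‖a'‖_{C⁰})^r < 1, where ‖·‖_{C⁰} denotes the supremum norm over ℝ (finite by periodicity), then the cohomological equation φ(x) = l(x)·φ(a(x)) + η(x) has a unique bounded continuous 1-periodic solution φ : ℝ → ℝ, and this solution is of class C^r. -/
/-!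
The solution is the Neumann series `φ = ∑ₙ Tⁿ η` of the weighted composition operator
`T f = l · (f ∘ a)`. Since `a` lifts a degree-one map, `‖a'‖ ≥ 1`, so `‖l‖ < 1` and `T` is a
contraction for the sup norm: the series converges uniformly and is the only bounded solution.
Regularity is proved by induction on `r`. The derivatives `uₙ` of the terms satisfy
`uₙ₊₁ ≤ ‖l'‖ ‖η‖ qⁿ + q uₙ` with `q = ‖l‖ ‖a'‖ < 1`, so the series may be differentiated termwise
and `φ` is `C¹`. Differentiating the equation shows that `φ'` solves the cohomological equation
with data `l · a'` and `η' + l' · (φ ∘ a)`, which satisfy the smallness condition for `r - 1`.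
-/

open Function

namespace Function.Periodic

variable {f : ℝ → ℝ} {c : ℝ}

theorem bddAbove_range_abs (hp : Periodic f c) (hc : c ≠ 0) (hf : Continuous f) :
    BddAbove (Set.range fun x => |f x|) :=
  ((hp.comp abs).compact_of_continuous hc (continuous_abs.comp hf)).isBounded.bddAbove

theorem abs_le_iSup_abs (hp : Periodic f c) (hc : c ≠ 0) (hf : Continuous f) (x : ℝ) :
    |f x| ≤ ⨆ y, |f y| :=
  le_ciSup (hp.bddAbove_range_abs hc hf) x

protected theorem deriv (hp : Periodic f c) : Periodic (deriv f) c := fun x => by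
  rw [← deriv_comp_add_const, show (fun y => f (y + c)) = f from funext hp]

end Function.Periodic

theorem iSup_abs_nonneg (f : ℝ → ℝ) : 0 ≤ ⨆ x, |f x| :=
  Real.iSup_nonneg fun _ => abs_nonneg _

theorem periodic_deriv_of_add_const {a : ℝ → ℝ} {c d : ℝ} (had : ∀ x, a (x + c) = a x + d) :
    Periodic (deriv a) c := fun x => by
  rw [← deriv_comp_add_const, show (fun y => a (y + c)) = fun y => a y + d from funext had,
    deriv_add_const]

theorem one_le_iSup_abs_deriv_of_lift {a : ℝ → ℝ} (ha : ContDiff ℝ 1 a)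
    (hap : ∀ x, a (x + 1) = a x + 1) : 1 ≤ ⨆ x, |deriv a x| := by
  obtain ⟨c, -, hc⟩ := exists_deriv_eq_slope a one_pos ha.continuous.continuousOn
    (ha.differentiable one_ne_zero).differentiableOn
  have hslope : deriv a c = 1 := by rw [hc, show (1 : ℝ) = 0 + 1 by norm_num, hap]; ring
  calc (1 : ℝ) = |deriv a c| := by rw [hslope, abs_one]
    _ ≤ ⨆ x, |deriv a x| := (periodic_deriv_of_add_const hap).abs_le_iSup_abs one_ne_zero
        (ha.continuous_deriv le_rfl) c

theorem iSup_abs_le_mul_iSup_abs_deriv_of_lift (l : ℝ → ℝ) {a : ℝ → ℝ} (ha : ContDiff ℝ 1 a)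
    (hap : ∀ x, a (x + 1) = a x + 1) : ⨆ x, |l x| ≤ (⨆ x, |l x|) * ⨆ x, |deriv a x| :=
  le_mul_of_one_le_right (iSup_abs_nonneg l) (one_le_iSup_abs_deriv_of_lift ha hap)

theorem mul_pow_lt_one_of_le {lam S : ℝ} {k r : ℕ} (hlam : 0 ≤ lam) (hS : 1 ≤ S) (hk : k ≤ r)
    (h : lam * S ^ r < 1) : lam * S ^ k < 1 :=
  (mul_le_mul_of_nonneg_left (pow_le_pow_right₀ hS hk) hlam).trans_lt h

theorem summable_of_succ_le_geometric_add {u : ℕ → ℝ} {c q : ℝ} (hu : ∀ n, 0 ≤ u n)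
    (hc : 0 ≤ c) (hq0 : 0 ≤ q) (hq : q < 1) (h : ∀ n, u (n + 1) ≤ c * q ^ n + q * u n) :
    Summable u := by
  refine summable_of_sum_range_le hu (c := (u 0 + c / (1 - q)) / (1 - q)) fun N => ?_
  have hgeom : ∑ n ∈ Finset.range N, q ^ n ≤ 1 / (1 - q) := by
    rw [Finset.range_eq_Ico]; simpa using geom_sum_Ico_le_of_lt_one (m := 0) (n := N) hq0 hq
  have hstep : ∑ n ∈ Finset.range N, u n ≤ u 0 + c / (1 - q) + q * ∑ n ∈ Finset.range N, u n :=
    calc ∑ n ∈ Finset.range N, u n ≤ ∑ n ∈ Finset.range (N + 1), u n :=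
          Finset.sum_le_sum_of_subset_of_nonneg (by simp) fun n _ _ => hu n
      _ = u 0 + ∑ n ∈ Finset.range N, u (n + 1) :=
          (Finset.sum_range_succ' _ _).trans (add_comm _ _)
      _ ≤ u 0 + ∑ n ∈ Finset.range N, (c * q ^ n + q * u n) := by gcongr with n; exact h n
      _ ≤ u 0 + c / (1 - q) + q * ∑ n ∈ Finset.range N, u n := by
          rw [Finset.sum_add_distrib, ← Finset.mul_sum, ← Finset.mul_sum, add_assoc]
          gcongr
          exact (mul_le_mul_of_nonneg_left hgeom hc).trans_eq (mul_one_div c _)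
  rw [le_div_iff₀ (by linarith)]
  linarith

def weightedComp (l a f : ℝ → ℝ) : ℝ → ℝ := fun x => l x * f (a x)

def IsCohoSolution (l η a φ : ℝ → ℝ) : Prop :=
  Continuous φ ∧ (∃ M : ℝ, ∀ x, |φ x| ≤ M) ∧ Periodic φ 1 ∧ ∀ x, φ x = l x * φ (a x) + η x

noncomputable def cohoSeries (l η a : ℝ → ℝ) (x : ℝ) : ℝ :=
  ∑' n, (weightedComp l a)^[n] η x

theorem abs_mul_le_of_abs_le {f g : ℝ → ℝ} {A B : ℝ} (hf : ∀ x, |f x| ≤ A)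
    (hg : ∀ x, |g x| ≤ B) (x : ℝ) : |f x * g x| ≤ A * B := by
  rw [abs_mul]
  exact mul_le_mul (hf x) (hg x) (abs_nonneg _) ((abs_nonneg _).trans (hf x))

section WeightedComp

variable {l a f : ℝ → ℝ}

theorem Function.Periodic.weightedComp_iterate (hlp : Periodic l 1)
    (hap : ∀ x, a (x + 1) = a x + 1) (hf : Periodic f 1) (n : ℕ) :
    Periodic ((weightedComp l a)^[n] f) 1 :=
  Iterate.rec (Periodic · 1) hf (fun g hg x => by simp only [weightedComp, hlp x, hap x, hg (a x)])
    n

theorem Continuous.weightedComp_iterate (hl : Continuous l) (ha : Continuous a)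
    (hf : Continuous f) (n : ℕ) : Continuous ((weightedComp l a)^[n] f) :=
  Iterate.rec Continuous hf (fun _ hg => hl.mul (hg.comp ha)) n

theorem ContDiff.weightedComp_iterate {k : WithTop ℕ∞} (hl : ContDiff ℝ k l)
    (ha : ContDiff ℝ k a) (hf : ContDiff ℝ k f) (n : ℕ) :
    ContDiff ℝ k ((weightedComp l a)^[n] f) :=
  Iterate.rec (ContDiff ℝ k ·) hf (fun _ hg => hl.mul (hg.comp ha)) n

theorem abs_weightedComp_iterate_le {lam B : ℝ} (hl : ∀ x, |l x| ≤ lam) (hf : ∀ x, |f x| ≤ B)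
    (n : ℕ) (x : ℝ) : |(weightedComp l a)^[n] f x| ≤ lam ^ n * B := by
  induction n generalizing x with
  | zero => simpa using hf x
  | succ n ih =>
    rw [iterate_succ_apply', pow_succ', mul_assoc]
    exact abs_mul_le_of_abs_le hl (fun y => ih (a y)) x

theorem hasDerivAt_weightedComp {x : ℝ} (hl : DifferentiableAt ℝ l x)
    (ha : DifferentiableAt ℝ a x) (hf : DifferentiableAt ℝ f (a x)) :
    HasDerivAt (weightedComp l a f)
      (weightedComp (fun y => l y * deriv a y) a (deriv f) x + deriv l x * f (a x)) x := by
  have h : HasDerivAt (weightedComp l a f)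
      (deriv l x * f (a x) + l x * (deriv f (a x) * deriv a x)) x :=
    hl.hasDerivAt.mul (hf.hasDerivAt.comp x ha.hasDerivAt)
  exact h.congr_deriv (by rw [weightedComp]; ring)

theorem abs_deriv_weightedComp_le {lam S L B B' : ℝ} (hl : ∀ x, |l x| ≤ lam)
    (ha' : ∀ x, |deriv a x| ≤ S) (hl' : ∀ x, |deriv l x| ≤ L) (hf : ∀ x, |f x| ≤ B)
    (hf' : ∀ x, |deriv f x| ≤ B') (hld : Differentiable ℝ l) (had : Differentiable ℝ a)
    (hfd : Differentiable ℝ f) (x : ℝ) :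
    |deriv (weightedComp l a f) x| ≤ L * B + lam * S * B' := by
  rw [(hasDerivAt_weightedComp (hld x) (had x) (hfd (a x))).deriv, add_comm]
  exact (abs_add_le _ _).trans (add_le_add (abs_mul_le_of_abs_le hl' (fun y => hf (a y)) x)
    (abs_mul_le_of_abs_le (abs_mul_le_of_abs_le hl ha') (fun y => hf' (a y)) x))

end WeightedComp

section Solutions

open Filter Topology

variable {l η a φ : ℝ → ℝ}

theorem IsCohoSolution.unique (hl : Continuous l) (hlp : Periodic l 1) (hlam : ⨆ x, |l x| < 1)
    {ψ : ℝ → ℝ} (hφ : IsCohoSolution l η a φ) (hψ : IsCohoSolution l η a ψ) : φ = ψ := by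
  obtain ⟨-, ⟨M, hM⟩, -, hφeq⟩ := hφ
  obtain ⟨-, ⟨N, hN⟩, -, hψeq⟩ := hψ
  have hfix : weightedComp l a (φ - ψ) = φ - ψ := funext fun x => by
    simp only [weightedComp, Pi.sub_apply, hφeq x, hψeq x]
    ring
  have hbound (n : ℕ) (x : ℝ) : |φ x - ψ x| ≤ (⨆ x, |l x|) ^ n * (M + N) := by
    have := abs_weightedComp_iterate_le (a := a) (f := φ - ψ)
      (hlp.abs_le_iSup_abs one_ne_zero hl)
      (fun y => (abs_sub (φ y) (ψ y)).trans (add_le_add (hM y) (hN y))) n x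
    rwa [iterate_fixed hfix] at this
  have hlim : Tendsto (fun n => (⨆ x, |l x|) ^ n * (M + N)) atTop (𝓝 0) := by
    simpa using (tendsto_pow_atTop_nhds_zero_of_lt_one (iSup_abs_nonneg l) hlam).mul_const (M + N)
  funext x
  exact sub_eq_zero.1 (abs_nonpos_iff.1 (ge_of_tendsto' hlim (hbound · x)))

theorem isCohoSolution_cohoSeries (hl : Continuous l) (hη : Continuous η) (ha : Continuous a)
    (hlp : Periodic l 1) (hηp : Periodic η 1) (hap : ∀ x, a (x + 1) = a x + 1)
    (hlam : ⨆ x, |l x| < 1) : IsCohoSolution l η a (cohoSeries l η a) := by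
  set lam := ⨆ x, |l x|
  set H := ⨆ x, |η x|
  have hbound : ∀ n x, ‖(weightedComp l a)^[n] η x‖ ≤ lam ^ n * H :=
    abs_weightedComp_iterate_le (hlp.abs_le_iSup_abs one_ne_zero hl)
      (hηp.abs_le_iSup_abs one_ne_zero hη)
  have hsum : Summable fun n => lam ^ n * H :=
    (summable_geometric_of_lt_one (iSup_abs_nonneg l) hlam).mul_right H
  refine ⟨continuous_tsum (hl.weightedComp_iterate ha hη) hsum hbound,
    ⟨∑' n, lam ^ n * H, fun x => tsum_of_norm_bounded hsum.hasSum (hbound · x)⟩,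
    fun x => tsum_congr fun n => hlp.weightedComp_iterate hap hηp n x, fun x => ?_⟩
  rw [cohoSeries, (hsum.of_norm_bounded (hbound · x)).tsum_eq_zero_add]
  simp only [iterate_succ_apply', weightedComp, tsum_mul_left, iterate_zero_apply]
  exact add_comm _ _

end Solutions

section Regularity

variable {l η a φ : ℝ → ℝ}

theorem summable_iSup_abs_deriv_weightedComp_iterate (hl : ContDiff ℝ 1 l)
    (hη : ContDiff ℝ 1 η) (ha : ContDiff ℝ 1 a) (hlp : Periodic l 1) (hηp : Periodic η 1)
    (hap : ∀ x, a (x + 1) = a x + 1) (hq : (⨆ x, |l x|) * (⨆ x, |deriv a x|) < 1) :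
    Summable fun n => ⨆ x, |deriv ((weightedComp l a)^[n] η) x| := by
  set lam := ⨆ x, |l x|
  set S := ⨆ x, |deriv a x|
  have hlb := hlp.abs_le_iSup_abs one_ne_zero hl.continuous
  have hηb := hηp.abs_le_iSup_abs one_ne_zero hη.continuous
  have hg := hl.weightedComp_iterate ha hη
  refine summable_of_succ_le_geometric_add (fun n => iSup_abs_nonneg _)
    (mul_nonneg (iSup_abs_nonneg (deriv l)) (iSup_abs_nonneg η))
    (mul_nonneg (iSup_abs_nonneg l) (iSup_abs_nonneg (deriv a))) hq fun n => ciSup_le fun x => ?_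
  rw [iterate_succ_apply']
  refine (abs_deriv_weightedComp_le hlb
    ((periodic_deriv_of_add_const hap).abs_le_iSup_abs one_ne_zero (ha.continuous_deriv le_rfl))
    (hlp.deriv.abs_le_iSup_abs one_ne_zero (hl.continuous_deriv le_rfl))
    (abs_weightedComp_iterate_le hlb hηb n)
    ((hlp.weightedComp_iterate hap hηp n).deriv.abs_le_iSup_abs one_ne_zero
      ((hg n).continuous_deriv le_rfl))
    (hl.differentiable one_ne_zero) (ha.differentiable one_ne_zero)
    ((hg n).differentiable one_ne_zero) x).trans ?_
  have hlamq : lam ^ n ≤ (lam * S) ^ n :=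
    pow_le_pow_left₀ (iSup_abs_nonneg l) (iSup_abs_le_mul_iSup_abs_deriv_of_lift l ha hap) n
  rw [mul_assoc _ (⨆ x, |η x|), mul_comm (⨆ x, |η x|)]
  gcongr
  · exact iSup_abs_nonneg _
  · exact iSup_abs_nonneg _

theorem contDiff_one_cohoSeries (hl : ContDiff ℝ 1 l) (hη : ContDiff ℝ 1 η) (ha : ContDiff ℝ 1 a)
    (hlp : Periodic l 1) (hηp : Periodic η 1) (hap : ∀ x, a (x + 1) = a x + 1)
    (hq : (⨆ x, |l x|) * (⨆ x, |deriv a x|) < 1) : ContDiff ℝ 1 (cohoSeries l η a) := by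
  set g : ℕ → ℝ → ℝ := fun n => (weightedComp l a)^[n] η
  have hg : ∀ n, ContDiff ℝ 1 (g n) := hl.weightedComp_iterate ha hη
  have hu (n : ℕ) : ∀ x, |deriv (g n) x| ≤ ⨆ y, |deriv (g n) y| :=
    (hlp.weightedComp_iterate hap hηp n).deriv.abs_le_iSup_abs one_ne_zero
      ((hg n).continuous_deriv le_rfl)
  have hsum := summable_iSup_abs_deriv_weightedComp_iterate hl hη ha hlp hηp hap hq
  rw [contDiff_one_iff_deriv]
  refine ⟨differentiable_tsum' hsum (fun n y => ((hg n).differentiable one_ne_zero y).hasDerivAt)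
    hu, ?_⟩
  rw [show cohoSeries l η a = fun x => ∑' n, g n x from rfl,
    deriv_tsum hsum (fun n => (hg n).differentiable one_ne_zero) hu (y₀ := 0) ?_]
  · exact continuous_tsum (fun n => (hg n).continuous_deriv le_rfl) hsum hu
  · have hlam := (iSup_abs_le_mul_iSup_abs_deriv_of_lift l ha hap).trans_lt hq
    exact ((summable_geometric_of_lt_one (iSup_abs_nonneg l) hlam).mul_right _).of_norm_bounded
      (abs_weightedComp_iterate_le (hlp.abs_le_iSup_abs one_ne_zero hl.continuous)
        (hηp.abs_le_iSup_abs one_ne_zero hη.continuous) · 0)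

theorem isCohoSolution_deriv (hφ : IsCohoSolution l η a φ) (hφ1 : ContDiff ℝ 1 φ)
    (hl : Differentiable ℝ l) (hη : Differentiable ℝ η) (ha : Differentiable ℝ a) :
    IsCohoSolution (fun x => l x * deriv a x) (fun x => deriv η x + deriv l x * φ (a x)) a
      (deriv φ) := by
  have hφ' : Continuous (deriv φ) := hφ1.continuous_deriv le_rfl
  have hφp : Periodic (deriv φ) 1 := hφ.2.2.1.deriv
  refine ⟨hφ', ⟨_, hφp.abs_le_iSup_abs one_ne_zero hφ'⟩, hφp, fun x => ?_⟩
  have h := (hasDerivAt_weightedComp (hl x) (ha x) (hφ1.differentiable one_ne_zero (a x))).add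
    (hη x).hasDerivAt
  rw [← show φ = weightedComp l a φ + η from funext hφ.2.2.2] at h
  rw [h.deriv, weightedComp]
  ring

theorem IsCohoSolution.contDiff_one (hl : ContDiff ℝ 1 l) (hη : ContDiff ℝ 1 η)
    (ha : ContDiff ℝ 1 a) (hlp : Periodic l 1) (hηp : Periodic η 1)
    (hap : ∀ x, a (x + 1) = a x + 1) (hq : (⨆ x, |l x|) * (⨆ x, |deriv a x|) < 1)
    (hφ : IsCohoSolution l η a φ) : ContDiff ℝ 1 φ := by
  have hlam := (iSup_abs_le_mul_iSup_abs_deriv_of_lift l ha hap).trans_lt hq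
  rw [hφ.unique hl.continuous hlp hlam
    (isCohoSolution_cohoSeries hl.continuous hη.continuous ha.continuous hlp hηp hap hlam)]
  exact contDiff_one_cohoSeries hl hη ha hlp hηp hap hq

theorem IsCohoSolution.contDiff (r : ℕ) (hl : ContDiff ℝ r l) (hη : ContDiff ℝ r η)
    (ha : ContDiff ℝ r a) (hlp : Periodic l 1) (hηp : Periodic η 1)
    (hap : ∀ x, a (x + 1) = a x + 1) (hsmall : (⨆ x, |l x|) * (⨆ x, |deriv a x|) ^ r < 1)
    (hφ : IsCohoSolution l η a φ) : ContDiff ℝ r φ := by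
  induction r generalizing l η φ with
  | zero => exact contDiff_zero.2 hφ.1
  | succ r ih =>
    push_cast at hl hη ha ⊢
    have hr : (r : WithTop ℕ∞) ≤ r + 1 := le_self_add
    have h1 : (1 : WithTop ℕ∞) ≤ r + 1 := le_add_self
    have hS := one_le_iSup_abs_deriv_of_lift (ha.of_le h1) hap
    have hφr : ContDiff ℝ r φ := ih (hl.of_le hr) (hη.of_le hr) (ha.of_le hr) hlp hηp
      (mul_pow_lt_one_of_le (iSup_abs_nonneg l) hS r.le_succ hsmall) hφ
    have hφ1 : ContDiff ℝ 1 φ := hφ.contDiff_one (hl.of_le h1) (hη.of_le h1) (ha.of_le h1) hlp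
      hηp hap (by simpa using mul_pow_lt_one_of_le (iSup_abs_nonneg l) hS r.succ_pos hsmall)
    have hsmall' : (⨆ x, |l x * deriv a x|) * (⨆ x, |deriv a x|) ^ r < 1 := by
      refine lt_of_le_of_lt ?_ hsmall
      rw [pow_succ', ← mul_assoc]
      gcongr
      exact ciSup_le (abs_mul_le_of_abs_le (hlp.abs_le_iSup_abs one_ne_zero hl.continuous)
        ((periodic_deriv_of_add_const hap).abs_le_iSup_abs one_ne_zero
          (ha.continuous_deriv h1)))
    have hφ' : ContDiff ℝ r (deriv φ) :=
      ih (l := fun x => l x * deriv a x) (η := fun x => deriv η x + deriv l x * φ (a x))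
        ((hl.of_le hr).mul ha.deriv') (hη.deriv'.add (hl.deriv'.mul (hφr.comp (ha.of_le hr))))
        (ha.of_le hr) (fun x => by simp only [hlp x, periodic_deriv_of_add_const hap x])
        (fun x => by simp only [hηp.deriv x, hlp.deriv x, hap x, hφ.2.2.1 (a x)]) hsmall'
        (isCohoSolution_deriv hφ hφ1 (hl.differentiable (by simp)) (hη.differentiable (by simp))
          (ha.differentiable (by simp)))
    exact contDiff_succ_iff_deriv.2 ⟨hφ1.differentiable one_ne_zero, by simp, hφ'⟩

end Regularity

/-- for 1-periodic `C^r` functions `l, η` and a `C^r` lift `a` of a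
degree-one circle map, if `‖l‖_{C⁰}·(‖a'‖_{C⁰})^r < 1` then the cohomological
equation `φ(x) = l(x)·φ(a(x)) + η(x)` has a unique bounded continuous 1-periodic
solution, and this solution is of class `C^r`. -/
theorem coho_Cr_regularity (r : ℕ) (l η a : ℝ → ℝ)
    (hl : ContDiff ℝ r l) (hη : ContDiff ℝ r η) (ha : ContDiff ℝ r a)
    (hlp : Function.Periodic l 1) (hηp : Function.Periodic η 1)
    (hap : ∀ x, a (x + 1) = a x + 1)
    (hsmall : (⨆ x : ℝ, |l x|) * (⨆ x : ℝ, |deriv a x|) ^ r < 1) :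
    (∃! φ : ℝ → ℝ, Continuous φ ∧ (∃ M : ℝ, ∀ x, |φ x| ≤ M) ∧ Function.Periodic φ 1 ∧
        ∀ x, φ x = l x * φ (a x) + η x) ∧
    ∀ φ : ℝ → ℝ, (Continuous φ ∧ (∃ M : ℝ, ∀ x, |φ x| ≤ M) ∧ Function.Periodic φ 1 ∧
        ∀ x, φ x = l x * φ (a x) + η x) → ContDiff ℝ r φ := by
  have hlam : ⨆ x, |l x| < 1 := by
    rcases r.eq_zero_or_pos with rfl | hr
    · simpa using hsmall
    · simpa using mul_pow_lt_one_of_le (iSup_abs_nonneg l)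
        (one_le_iSup_abs_deriv_of_lift (ha.of_le (by exact_mod_cast hr)) hap) r.zero_le hsmall
  have hsol := isCohoSolution_cohoSeries hl.continuous hη.continuous ha.continuous hlp hηp hap hlam
  exact ⟨⟨cohoSeries l η a, hsol, fun _ hψ => IsCohoSolution.unique hl.continuous hlp hlam hψ hsol⟩,
    fun _ hφ => IsCohoSolution.contDiff r hl hη ha hlp hηp hap hsmall hφ⟩
end

section
/- Let w : ℝ → ℝ be infinitely differentiable, and for j ∈ ℕ define the Taylor coefficients W_j = w^{(j)}(0)/j!, S_j = (sin∘w)^{(j)}(0)/j!, and C_j = (cos∘w)^{(j)}(0)/j!, where u^{(j)} denotes the j-th derivative. Then S_0 = sin(W_0), C_0 = cos(W_0), and for every j ≥ 1: S_j = (1/j)·Σ_{k=0}^{j−1} (j−k)·W_{j−k}·C_k and C_j = −(1/j)·Σ_{k=0}^{j−1} (j−k)·W_{j−k}·S_k. -/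
/-!
Both `sin ∘ w` and `cos ∘ w` satisfy `u' = v · w'` with `v = cos ∘ w`, resp. `v = -(sin ∘ w)`.
Taking Taylor coefficients of this identity, the coefficient of `u'` is `(j + 1) U_{j+1}`, and
that of `v · w'` is the Cauchy product of those of `v` and `w'` (Leibniz rule).
-/

open Nat

section TaylorCoeff

variable {𝕜 : Type*} [NontriviallyNormedField 𝕜]

noncomputable def taylorCoeff (f : 𝕜 → 𝕜) (x : 𝕜) (j : ℕ) : 𝕜 :=
  iteratedDeriv j f x / (j ! : 𝕜)

@[simp]
lemma taylorCoeff_zero (f : 𝕜 → 𝕜) (x : 𝕜) : taylorCoeff f x 0 = f x := by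
  simp [taylorCoeff]

lemma taylorCoeff_neg (f : 𝕜 → 𝕜) (x : 𝕜) (j : ℕ) :
    taylorCoeff (-f) x j = -taylorCoeff f x j := by
  simp [taylorCoeff, iteratedDeriv_neg, neg_div]

variable [CharZero 𝕜]

lemma taylorCoeff_deriv (f : 𝕜 → 𝕜) (x : 𝕜) (j : ℕ) :
    taylorCoeff (deriv f) x j = (j + 1) * taylorCoeff f x (j + 1) := by
  have : (j ! : 𝕜) ≠ 0 := Nat.cast_ne_zero.mpr (factorial_ne_zero j)
  have : (j + 1 : 𝕜) ≠ 0 := Nat.cast_add_one_ne_zero j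
  rw [taylorCoeff, taylorCoeff, ← iteratedDeriv_succ', factorial_succ]
  push_cast
  field_simp

lemma taylorCoeff_mul {f g : 𝕜 → 𝕜} {x : 𝕜} {j : ℕ}
    (hf : ContDiffAt 𝕜 j f x) (hg : ContDiffAt 𝕜 j g x) :
    taylorCoeff (f * g) x j =
      ∑ k ∈ Finset.range (j + 1), taylorCoeff f x k * taylorCoeff g x (j - k) := by
  rw [taylorCoeff, iteratedDeriv_mul hf hg, Finset.sum_div]
  refine Finset.sum_congr rfl fun k hk => ?_
  have hkj : k ≤ j := Finset.mem_range_succ_iff.mp hk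
  have hchoose : (j.choose k : 𝕜) * k ! * (j - k)! = j ! := by
    exact_mod_cast choose_mul_factorial_mul_factorial hkj
  have : (k ! : 𝕜) ≠ 0 := Nat.cast_ne_zero.mpr (factorial_ne_zero k)
  have : ((j - k)! : 𝕜) ≠ 0 := Nat.cast_ne_zero.mpr (factorial_ne_zero (j - k))
  have : (j.choose k : 𝕜) ≠ 0 := Nat.cast_ne_zero.mpr (choose_pos hkj).ne'
  rw [taylorCoeff, taylorCoeff, ← hchoose]
  field_simp

lemma taylorCoeff_succ_of_deriv_eq_mul {u v w : 𝕜 → 𝕜} {x : 𝕜} {n : ℕ}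
    (hu : deriv u = v * deriv w) (hv : ContDiffAt 𝕜 n v x) (hw : ContDiffAt 𝕜 n (deriv w) x) :
    taylorCoeff u x (n + 1) = 1 / ((n + 1 : ℕ) : 𝕜) *
      ∑ k ∈ Finset.range (n + 1),
        ((n + 1 - k : ℕ) : 𝕜) * taylorCoeff w x (n + 1 - k) * taylorCoeff v x k := by
  have hcoeff : (n + 1) * taylorCoeff u x (n + 1) =
      ∑ k ∈ Finset.range (n + 1),
        ((n + 1 - k : ℕ) : 𝕜) * taylorCoeff w x (n + 1 - k) * taylorCoeff v x k := by
    rw [← taylorCoeff_deriv, hu, taylorCoeff_mul hv hw]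
    refine Finset.sum_congr rfl fun k hk => ?_
    have hkn : n + 1 - k = n - k + 1 := by have := Finset.mem_range_succ_iff.mp hk; omega
    rw [taylorCoeff_deriv, hkn]
    push_cast
    ring
  have : (n + 1 : 𝕜) ≠ 0 := Nat.cast_add_one_ne_zero n
  rw [← hcoeff]
  field_simp
  push_cast
  ring

end TaylorCoeff

/-- recursion for the Taylor coefficients of `sin ∘ w` and `cos ∘ w`
at `0`: with `W_j = w^{(j)}(0)/j!`, `S_j = (sin∘w)^{(j)}(0)/j!`,
`C_j = (cos∘w)^{(j)}(0)/j!`, one has `S_0 = sin W_0`, `C_0 = cos W_0`, and for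
`j ≥ 1`, `S_j = (1/j)·Σ_{k<j} (j−k)·W_{j−k}·C_k` and
`C_j = −(1/j)·Σ_{k<j} (j−k)·W_{j−k}·S_k`. -/
theorem sin_cos_taylor_recursion (w : ℝ → ℝ) (hw : ContDiff ℝ (⊤ : ℕ∞) w)
    (W S C : ℕ → ℝ)
    (hW : ∀ j, W j = iteratedDeriv j w 0 / (j.factorial : ℝ))
    (hS : ∀ j, S j = iteratedDeriv j (fun s => Real.sin (w s)) 0 / (j.factorial : ℝ))
    (hC : ∀ j, C j = iteratedDeriv j (fun s => Real.cos (w s)) 0 / (j.factorial : ℝ)) :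
    S 0 = Real.sin (W 0) ∧ C 0 = Real.cos (W 0) ∧
    ∀ j : ℕ, 1 ≤ j →
      S j = (1 / (j : ℝ)) * ∑ k ∈ Finset.range j, ((j - k : ℕ) : ℝ) * W (j - k) * C k ∧
      C j = -(1 / (j : ℝ)) * ∑ k ∈ Finset.range j, ((j - k : ℕ) : ℝ) * W (j - k) * S k := by
  obtain rfl : W = taylorCoeff w 0 := funext hW
  obtain rfl : S = taylorCoeff (fun s => Real.sin (w s)) 0 := funext hS
  obtain rfl : C = taylorCoeff (fun s => Real.cos (w s)) 0 := funext hC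
  have hw' : ContDiff ℝ (⊤ : ℕ∞) (deriv w) := hw.iterate_deriv 1
  have hsmooth {f : ℝ → ℝ} (hf : ContDiff ℝ (⊤ : ℕ∞) f) (n : ℕ) : ContDiffAt ℝ n f 0 :=
    hf.contDiffAt.of_le (by exact_mod_cast le_top)
  have hdiff (s : ℝ) : HasDerivAt w (deriv w s) s :=
    (hw.differentiable (by simp)).differentiableAt.hasDerivAt
  have hsin : deriv (fun s => Real.sin (w s)) = (fun s => Real.cos (w s)) * deriv w :=
    funext fun s => (hdiff s).sin.deriv
  have hcos : deriv (fun s => Real.cos (w s)) = -(fun s => Real.sin (w s)) * deriv w :=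
    funext fun s => by simpa using (hdiff s).cos.deriv
  refine ⟨by simp, by simp, fun j hj => ?_⟩
  obtain ⟨n, rfl⟩ := Nat.exists_eq_add_of_le' hj
  constructor
  · exact taylorCoeff_succ_of_deriv_eq_mul hsin
      (hsmooth (Real.contDiff_cos.comp hw) n) (hsmooth hw' n)
  · rw [taylorCoeff_succ_of_deriv_eq_mul hcos
      (hsmooth (Real.contDiff_sin.comp hw).neg n) (hsmooth hw' n)]
    simp only [taylorCoeff_neg, mul_neg, Finset.sum_neg_distrib]
    ring
end
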